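/- Let (α_j) be a positive sequence with α_j → 0 and Σ_{j} α_j = ∞, and let ε > 0. Suppose |d_j − d| < ε/2 for all j ≥ j₀ and α_j < ε/2 for all j ≥ j₀. If the recursion x_{j+1} = x_j + α_j sgn(d_j − x_j) satisfies |x_{j₁} − d| < ε for some j₁ ≥ j₀, then |x_j − d| < ε for all j ≥ j₁. -/

import Mathlib

open Filter

/-- Sign function: 1 if positive, -1 if negative, 0 at zero. -/
noncomputable def sgn (z : ℝ) : ℝ := if 0 < z then 1 else if z < 0 then -1 else 0

lemma sgn_of_pos {z : ℝ} (hz : 0 < z) : sgn z = 1 := if_pos hz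

lemma sgn_of_neg {z : ℝ} (hz : z < 0) : sgn z = -1 := by
  rw [sgn, if_neg hz.not_gt, if_pos hz]

lemma sgn_zero : sgn 0 = 0 := by
  simp [sgn]

/- A step moves `x` towards the target `y`, so it cannot leave the band on the side away from
`y`; on the side of `y` it ends within `a < ε / 2` of `y`, which is itself within `ε / 2` of `c`. -/
lemma abs_add_mul_sgn_sub_lt {x y c a ε : ℝ} (ha : 0 ≤ a) (haε : a < ε / 2)
    (hy : |y - c| < ε / 2) (hx : |x - c| < ε) : |x + a * sgn (y - x) - c| < ε := by
  rw [abs_lt] at hx hy ⊢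
  rcases lt_trichotomy x y with hxy | rfl | hxy
  · rw [sgn_of_pos (sub_pos.mpr hxy)]
    constructor <;> linarith
  · rw [sub_self, sgn_zero]
    constructor <;> linarith
  · rw [sgn_of_neg (sub_neg.mpr hxy)]
    constructor <;> linarith

theorem stmt_13_general (α : ℕ → ℝ) (hαpos : ∀ j, 0 < α j)
    (d : ℕ → ℝ) (dlim : ℝ) (ε : ℝ) (j₀ : ℕ)
    (hd : ∀ j ≥ j₀, |d j - dlim| < ε / 2) (hα : ∀ j ≥ j₀, α j < ε / 2)
    (x : ℕ → ℝ) (hx : ∀ j, x (j + 1) = x j + α j * sgn (d j - x j))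
    (j₁ : ℕ) (hj₁ : j₁ ≥ j₀) (hstart : |x j₁ - dlim| < ε) :
    ∀ j ≥ j₁, |x j - dlim| < ε := by
  intro j hj
  induction j, hj using Nat.le_induction with
  | base => exact hstart
  | succ n hn ih =>
    have hn₀ : n ≥ j₀ := hj₁.trans hn
    rw [hx n]
    exact abs_add_mul_sgn_sub_lt (hαpos n).le (hα n hn₀) (hd n hn₀) ih

theorem stmt_13 (α : ℕ → ℝ) (hαpos : ∀ j, 0 < α j) (hα0 : Tendsto α atTop (nhds 0))
    (hαdiv : Tendsto (fun n => ∑ j ∈ Finset.range n, α j) atTop atTop)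
    (d : ℕ → ℝ) (dlim : ℝ) (ε : ℝ) (hε : 0 < ε) (j₀ : ℕ)
    (hd : ∀ j ≥ j₀, |d j - dlim| < ε / 2) (hα : ∀ j ≥ j₀, α j < ε / 2)
    (x : ℕ → ℝ) (hx : ∀ j, x (j + 1) = x j + α j * sgn (d j - x j))
    (j₁ : ℕ) (hj₁ : j₁ ≥ j₀) (hstart : |x j₁ - dlim| < ε) :
    ∀ j ≥ j₁, |x j - dlim| < ε :=
  stmt_13_general α hαpos d dlim ε j₀ hd hα x hx j₁ hj₁ hstart
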